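/- Suppose a family of states ρ_x indexed by a sufficient-coordinate space X satisfies the invariance condition (ρ_{x,t} applied to Π_t^τ(u, dv)) = π_{x,t}^τ(u,dv) · ρ_{f_{x,t}^τ(u,v), t+τ} with transition maps f satisfying the flow property f_{r+τ}^{τ'}(u',v') ∘ f_r^τ(u,v) = f_r^{τ+τ'}((u,u'),(v,v')). Then the induced transition kernels π_{x,r}^τ(u, dx') = π_{x,r}^τ(u, f_{x,r}^{-1}(u, dx')) satisfy the Chapman–Kolmogorov equation ∫_X π_{x,r}^τ(u, dx') π_{x',r+τ}^{τ'}(u', dx'') = π_{x,r}^{τ+τ'}((u,u'), dx''). -/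
import Mathlib


/-- Sufficient coordinates: if a family of states `ρ x t` satisfies the
invariance condition `ρ_{x,t} Π_t^τ(u,v) = π_{x,t}^τ(u,v) ρ_{f_{x,t}^τ(u,v),t+τ}`
for instrument superoperators `Π` with the composition property, and the
transition maps `f` satisfy the flow property, then the induced transition
kernels on `X`, `K(x,x') = ∑_{v : f(x,v)=x'} π_x(u,v)`, satisfy the
Chapman–Kolmogorov equation. -/
theorem sufficient_coordinates_chapman_kolmogorov
    {n X V U : Type*} [Fintype n] [DecidableEq n]
    [Fintype X] [DecidableEq X] [Fintype V]
    (ρ : X → ℕ → Matrix n n ℂ)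
    (hρtr : ∀ x t, (ρ x t).trace = 1)
    (Ins : (r : ℕ) → (τ : ℕ) → (ℕ → U) → (Fin τ → V) →
      (Matrix n n ℂ →ₗ[ℂ] Matrix n n ℂ))
    (f : (r : ℕ) → (τ : ℕ) → (ℕ → U) → X → (Fin τ → V) → X)
    (π : (r : ℕ) → (τ : ℕ) → (ℕ → U) → X → (Fin τ → V) → ℂ)
    -- instrument composition (1.5)
    (hinstr : ∀ r τ τ' (u : ℕ → U) (v : Fin τ → V) (v' : Fin τ' → V),
      (Ins r τ u v).comp (Ins (r + τ) τ' u v') = Ins r (τ + τ') u (Fin.append v v'))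
    -- invariance of the family of states (2.1)
    (hinv : ∀ r τ (u : ℕ → U) x (v : Fin τ → V) (Q : Matrix n n ℂ),
      (ρ x r * Ins r τ u v Q).trace =
        π r τ u x v * (ρ (f r τ u x v) (r + τ) * Q).trace)
    -- flow property of the transition maps (2.7)
    (hflow : ∀ r τ τ' (u : ℕ → U) x (v : Fin τ → V) (v' : Fin τ' → V),
      f (r + τ) τ' u (f r τ u x v) v' = f r (τ + τ') u x (Fin.append v v'))
    -- each `π` is a probability distribution on outcome segments
    (hprob : ∀ r τ (u : ℕ → U) x, (∑ v : Fin τ → V, π r τ u x v) = 1)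
    (r τ τ' : ℕ) (u : ℕ → U) (x x'' : X) :
    ∑ x' : X,
        (∑ v : Fin τ → V, if f r τ u x v = x' then π r τ u x v else 0) *
        (∑ v' : Fin τ' → V,
          if f (r + τ) τ' u x' v' = x'' then π (r + τ) τ' u x' v' else 0) =
      ∑ w : Fin (τ + τ') → V,
        if f r (τ + τ') u x w = x'' then π r (τ + τ') u x w else 0 := by

  classical
  -- multiplicativity of π along the flow
  have key : ∀ (v : Fin τ → V) (v' : Fin τ' → V),
      π r (τ + τ') u x (Fin.append v v') =
        π r τ u x v * π (r + τ) τ' u (f r τ u x v) v' := by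
    intro v v'
    have hI : Ins r τ u v (Ins (r + τ) τ' u v' 1) =
        Ins r (τ + τ') u (Fin.append v v') 1 := by
      have h := hinstr r τ τ' u v v'
      calc Ins r τ u v (Ins (r + τ) τ' u v' 1)
          = ((Ins r τ u v).comp (Ins (r + τ) τ' u v')) 1 := rfl
        _ = Ins r (τ + τ') u (Fin.append v v') 1 := by rw [h]
    have h1 := hinv r (τ + τ') u x (Fin.append v v') 1
    have h2 := hinv r τ u x v (Ins (r + τ) τ' u v' 1)
    have h3 := hinv (r + τ) τ' u (f r τ u x v) v' 1
    simp only [mul_one, hρtr] at h1 h3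
    rw [hI, h1, h3] at h2
    exact h2
  -- the equivalence splitting a segment of length τ+τ'
  let e : ((Fin τ → V) × (Fin τ' → V)) ≃ (Fin (τ + τ') → V) :=
    { toFun := fun p => Fin.append p.1 p.2
      invFun := fun w => (fun i => w (Fin.castAdd τ' i), fun i => w (Fin.natAdd τ i))
      left_inv := by
        intro p
        refine Prod.ext ?_ ?_ <;> funext i <;>
          simp [Fin.append_left, Fin.append_right]
      right_inv := by
        intro w
        funext i
        refine Fin.addCases (fun i => ?_) (fun i => ?_) i <;>
          simp [Fin.append_left, Fin.append_right] }
  rw [← Equiv.sum_comp e (fun w => if f r (τ + τ') u x w = x'' then π r (τ + τ') u x w else 0)]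
  rw [Fintype.sum_prod_type]
  simp only [e, Equiv.coe_fn_mk]
  calc ∑ x' : X,
        (∑ v : Fin τ → V, if f r τ u x v = x' then π r τ u x v else 0) *
        (∑ v' : Fin τ' → V,
          if f (r + τ) τ' u x' v' = x'' then π (r + τ) τ' u x' v' else 0)
      = ∑ x' : X, ∑ v : Fin τ → V,
          (if f r τ u x v = x' then π r τ u x v else 0) *
          (∑ v' : Fin τ' → V,
            if f (r + τ) τ' u x' v' = x'' then π (r + τ) τ' u x' v' else 0) := by
        simp [Finset.sum_mul]
    _ = ∑ v : Fin τ → V, ∑ x' : X,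
          (if f r τ u x v = x' then π r τ u x v else 0) *
          (∑ v' : Fin τ' → V,
            if f (r + τ) τ' u x' v' = x'' then π (r + τ) τ' u x' v' else 0) :=
        Finset.sum_comm
    _ = ∑ v : Fin τ → V,
          π r τ u x v * ∑ v' : Fin τ' → V,
            if f (r + τ) τ' u (f r τ u x v) v' = x''
            then π (r + τ) τ' u (f r τ u x v) v' else 0 := by
        refine Finset.sum_congr rfl fun v _ => ?_
        rw [Finset.sum_eq_single (f r τ u x v)]
        · simp
        · intro b _ hb
          simp [Ne.symm hb]
        · intro h; exact absurd (Finset.mem_univ _) h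
    _ = ∑ v : Fin τ → V, ∑ v' : Fin τ' → V,
          if f r (τ + τ') u x (Fin.append v v') = x''
          then π r (τ + τ') u x (Fin.append v v') else 0 := by
        refine Finset.sum_congr rfl fun v _ => ?_
        rw [Finset.mul_sum]
        refine Finset.sum_congr rfl fun v' _ => ?_
        rw [hflow, key, mul_ite, mul_zero]
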